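/- arXiv:2409.04887 — 2 statements merged into one kernel-verified Lean document; each statement's English description precedes it below -/
import Mathlib

section
/- Representation theorem for loop-cumulative relations: a binary relation on 𝓛-formulas is a loop-cumulative consequence relation if and only if it equals |~_𝓜 for some conceptual cumulative ordered model 𝓜. -/
namespace DR

/-- Formulas of the lattice-based language 𝓛: variables, ⊥, ⊤, ∧, ∨. -/
inductive Fm : Type where
  | var : ℕ → Fm
  | bot : Fm
  | top : Fm
  | and : Fm → Fm → Fm
  | or  : Fm → Fm → Fm

/-- A polarity (formal context) (A, X, I). -/
structure Polarity : Type 1 where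
  Obj : Type
  Feat : Type
  I : Obj → Feat → Prop

namespace Polarity

variable (P : Polarity)

def up (B : Set P.Obj) : Set P.Feat := {x | ∀ b ∈ B, P.I b x}
def dn (Y : Set P.Feat) : Set P.Obj := {a | ∀ y ∈ Y, P.I a y}

lemma subset_dn_up (B : Set P.Obj) : B ⊆ P.dn (P.up B) :=
  fun _ ha _ hx => hx _ ha

lemma subset_up_dn (Y : Set P.Feat) : Y ⊆ P.up (P.dn Y) :=
  fun _ hx _ ha => ha _ hx

lemma up_anti {B C : Set P.Obj} (h : B ⊆ C) : P.up C ⊆ P.up B :=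
  fun _ hx b hb => hx b (h hb)

lemma dn_anti {Y Z : Set P.Feat} (h : Y ⊆ Z) : P.dn Z ⊆ P.dn Y :=
  fun _ ha y hy => ha y (h hy)

end Polarity

/-- A formal concept of a polarity: a Galois-stable pair (extension, intension). -/
structure Concept (P : Polarity) : Type where
  ext : Set P.Obj
  int : Set P.Feat
  up_ext : P.up ext = int
  dn_int : P.dn int = ext

namespace Concept

variable {P : Polarity}

/-- Lattice meet of concepts: extensions intersect. -/
def meet (c d : Concept P) : Concept P where
  ext := c.ext ∩ d.ext
  int := P.up (c.ext ∩ d.ext)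
  up_ext := rfl
  dn_int := by
    apply Set.Subset.antisymm
    · intro a ha
      constructor
      · rw [← c.dn_int]
        intro y hy
        apply ha
        rw [← c.up_ext] at hy
        exact P.up_anti Set.inter_subset_left hy
      · rw [← d.dn_int]
        intro y hy
        apply ha
        rw [← d.up_ext] at hy
        exact P.up_anti Set.inter_subset_right hy
    · exact P.subset_dn_up _

/-- Lattice join of concepts: intensions intersect. -/
def join (c d : Concept P) : Concept P where
  ext := P.dn (c.int ∩ d.int)
  int := c.int ∩ d.int
  up_ext := by
    apply Set.Subset.antisymm
    · intro x hx
      constructor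
      · rw [← c.up_ext]
        intro b hb
        apply hx
        rw [← c.dn_int] at hb
        exact P.dn_anti Set.inter_subset_left hb
      · rw [← d.up_ext]
        intro b hb
        apply hx
        rw [← d.dn_int] at hb
        exact P.dn_anti Set.inter_subset_right hb
    · exact P.subset_up_dn _
  dn_int := rfl

/-- The greatest concept. -/
def top (P : Polarity) : Concept P where
  ext := Set.univ
  int := P.up Set.univ
  up_ext := rfl
  dn_int := Set.eq_univ_of_univ_subset (P.subset_dn_up _)

/-- The least concept. -/
def bot (P : Polarity) : Concept P where
  ext := P.dn Set.univ
  int := Set.univ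
  up_ext := Set.eq_univ_of_univ_subset (P.subset_up_dn _)
  dn_int := rfl

end Concept

/-- A polarity-based model: a polarity with a valuation of variables into concepts. -/
structure Model : Type 1 where
  P : Polarity
  V : ℕ → Concept P

namespace Model

/-- Homomorphic extension of the valuation to all formulas. -/
def interp (M : Model) : Fm → Concept M.P
  | .var n => M.V n
  | .bot => Concept.bot M.P
  | .top => Concept.top M.P
  | .and φ ψ => Concept.meet (M.interp φ) (M.interp ψ)
  | .or φ ψ => Concept.join (M.interp φ) (M.interp ψ)

/-- M, a ⊩ φ : the object a is in the extension of φ. -/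
def objSat (M : Model) (a : M.P.Obj) (φ : Fm) : Prop := a ∈ (M.interp φ).ext

/-- M, x ≻ φ : the feature x is in the intension of φ. -/
def featSat (M : Model) (x : M.P.Feat) (φ : Fm) : Prop := x ∈ (M.interp φ).int

end Model

/-- Validity of the sequent φ ⊢ ψ: in every polarity-based model the
extension of φ is contained in the extension of ψ. -/
def SeqValid (φ ψ : Fm) : Prop :=
  ∀ M : Model, (M.interp φ).ext ⊆ (M.interp ψ).ext

/-- A conceptual cumulative consequence relation: reflexive and closed
under (LLE), (RW), (CM) and (Cut). -/
structure IsCumulative (R : Fm → Fm → Prop) : Prop where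
  refl : ∀ φ, R φ φ
  lle : ∀ φ ψ χ, SeqValid φ ψ → SeqValid ψ φ → R φ χ → R ψ χ
  rw : ∀ φ ψ χ, SeqValid φ ψ → R χ φ → R χ ψ
  cm : ∀ φ ψ χ, R φ ψ → R φ χ → R (Fm.and φ ψ) χ
  cut : ∀ φ ψ χ, R (Fm.and φ ψ) χ → R φ ψ → R φ χ

/-- Closure under the rule (Loop). -/
def LoopClosed (R : Fm → Fm → Prop) : Prop :=
  ∀ (n : ℕ) (φ : ℕ → Fm),
    (∀ i < n, R (φ i) (φ (i + 1))) → R (φ n) (φ 0) → R (φ 0) (φ n)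

/-- A pointed polarity-based model. -/
structure PointedModel : Type 1 where
  M : Model
  pt : M.P.Obj

/-- Satisfaction at a pointed model. -/
def PointedModel.sat (Ma : PointedModel) (φ : Fm) : Prop := Ma.M.objSat Ma.pt φ

/-- A pointed model is normal for φ iff it satisfies every plausible consequence of φ. -/
def NormalFor (R : Fm → Fm → Prop) (Ma : PointedModel) (φ : Fm) : Prop :=
  ∀ ψ, R φ ψ → Ma.sat ψ

/-- A pointed model is supernormal for φ. -/
def SupernormalFor (R : Fm → Fm → Prop) (Ma : PointedModel) (φ : Fm) : Prop :=
  ∀ ψ, R φ ψ ↔ Ma.sat ψ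

/-- A frame (S, l, ≺): states labelled by sets of pointed polarity-based
models with a preference relation. -/
structure Frame : Type 2 where
  S : Type
  l : S → Set PointedModel
  prec : S → S → Prop

/-- t is minimal in P (w.r.t. prec). -/
def MinimalIn {α : Type _} (prec : α → α → Prop) (P : Set α) (t : α) : Prop :=
  t ∈ P ∧ ∀ s ∈ P, ¬ prec s t

/-- t is a minimum of P (w.r.t. prec). -/
def IsMinimum {α : Type _} (prec : α → α → Prop) (P : Set α) (t : α) : Prop :=
  t ∈ P ∧ ∀ s ∈ P, s ≠ t → prec t s

/-- P is smooth (w.r.t. prec). -/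
def Smooth {α : Type _} (prec : α → α → Prop) (P : Set α) : Prop :=
  ∀ t ∈ P, MinimalIn prec P t ∨ ∃ s, MinimalIn prec P s ∧ prec s t

namespace Frame

/-- s ⊨ φ : every pointed model in l(s) satisfies φ. -/
def stateSat (F : Frame) (s : F.S) (φ : Fm) : Prop :=
  ∀ Ma ∈ F.l s, Ma.sat φ

/-- φ̂ : the set of states satisfying φ. -/
def hat (F : Frame) (φ : Fm) : Set F.S := {s | F.stateSat s φ}

/-- A conceptual cumulative model: φ̂ is smooth for every φ. -/
def IsCumulativeModel (F : Frame) : Prop :=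
  ∀ φ : Fm, Smooth F.prec (F.hat φ)

/-- The consequence relation |~_𝓜 defined by a frame: every state minimal
in φ̂ belongs to ψ̂. -/
def conseq (F : Frame) (φ ψ : Fm) : Prop :=
  ∀ s, MinimalIn F.prec (F.hat φ) s → s ∈ F.hat ψ

/-- Replace the preference relation of a frame. -/
def withPrec (F : Frame) (p : F.S → F.S → Prop) : Frame := ⟨F.S, F.l, p⟩

end Frame

/-- The equivalence class φ/∼ of φ under ∼ (φ ∼ ψ iff φ |~ ψ and ψ |~ φ). -/
def cls (R : Fm → Fm → Prop) (φ : Fm) : Set Fm := {ψ | R φ ψ ∧ R ψ φ}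

/-- φ/∼ ≤ ψ/∼ : there is χ ∈ φ/∼ with ψ |~ χ (ψ any representative of ψ/∼). -/
def clsLE (R : Fm → Fm → Prop) (C D : Set Fm) : Prop :=
  ∃ χ ∈ C, ∃ ψ ∈ D, R ψ χ

/-- The canonical model of a consequence relation: states are the
equivalence classes φ/∼, labelled by the normal pointed models for φ,
with φ/∼ ≺ ψ/∼ iff φ/∼ ≤ ψ/∼ and φ/∼ ≠ ψ/∼. -/
def canonicalFrame (R : Fm → Fm → Prop) : Frame where
  S := {C : Set Fm // ∃ φ, C = cls R φ}
  l := fun s => {Ma | ∃ φ, s.val = cls R φ ∧ NormalFor R Ma φ}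
  prec := fun s t => clsLE R s.val t.val ∧ s ≠ t

/-- The state φ/∼ of the canonical model. -/
def canonicalState (R : Fm → Fm → Prop) (φ : Fm) : (canonicalFrame R).S :=
  ⟨cls R φ, φ, rfl⟩

/-!
Soundness: starting from a minimal state of φ̂₀ and following a loop φ₀ |~ φ₁ |~ ⋯ |~ φₙ |~ φ₀,
smoothness and transitivity give, for each i, a minimal state of φ̂ᵢ that is the starting state or
preferred to it; at i = n that state lies in φ̂₀, so by minimality it is the starting state itself.

Completeness: take the formulas themselves as states, label φ by the pointed models normal for φ,
and prefer φ to ψ when ψ |~* φ but not φ |~* ψ, where |~* is the reflexive-transitive closure of |~;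
this is a strict partial order. A supernormal pointed model for every χ shows that χ lies in φ̂ iff
χ |~ φ, and (Loop), in the form "φ |~* χ and χ |~ φ imply φ |~ χ", shows that the minimal states of
φ̂ are exactly the χ with χ |~ φ and φ |~ χ.
-/

open Relation

theorem Concept.eq_of_ext_eq {P : Polarity} {c d : Concept P} (h : c.ext = d.ext) : c = d := by
  obtain ⟨_, _, rfl, _⟩ := c
  obtain ⟨_, _, rfl, _⟩ := d
  subst h
  rfl

theorem Concept.ext_subset_ext_iff {P : Polarity} {c d : Concept P} :
    c.ext ⊆ d.ext ↔ d.int ⊆ c.int := by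
  constructor
  · intro h
    rw [← c.up_ext, ← d.up_ext]
    exact P.up_anti h
  · intro h
    rw [← c.dn_int, ← d.dn_int]
    exact P.dn_anti h

theorem Concept.join_ext_subset_iff {P : Polarity} {c d e : Concept P} :
    (c.join d).ext ⊆ e.ext ↔ c.ext ⊆ e.ext ∧ d.ext ⊆ e.ext := by
  simp only [ext_subset_ext_iff]
  exact Set.subset_inter_iff

namespace SeqValid

theorem refl (φ : Fm) : SeqValid φ φ := fun _ => subset_rfl

theorem trans {φ ψ χ : Fm} (h₁ : SeqValid φ ψ) (h₂ : SeqValid ψ χ) : SeqValid φ χ :=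
  fun M => (h₁ M).trans (h₂ M)

theorem top (φ : Fm) : SeqValid φ .top := fun _ _ _ => trivial

theorem bot (φ : Fm) : SeqValid .bot φ :=
  fun _ => Concept.ext_subset_ext_iff.mpr (Set.subset_univ _)

theorem and_iff {φ ψ χ : Fm} : SeqValid φ (.and ψ χ) ↔ SeqValid φ ψ ∧ SeqValid φ χ := by
  simp only [SeqValid, Model.interp, Concept.meet, Set.subset_inter_iff, forall_and]

theorem or_iff {φ ψ χ : Fm} : SeqValid (.or φ ψ) χ ↔ SeqValid φ χ ∧ SeqValid ψ χ := by
  simp only [SeqValid, Model.interp, Concept.join_ext_subset_iff, forall_and]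

theorem and_left (φ ψ : Fm) : SeqValid (.and φ ψ) φ := (and_iff.mp (refl _)).1

theorem and_right (φ ψ : Fm) : SeqValid (.and φ ψ) ψ := (and_iff.mp (refl _)).2

theorem and_comm (φ ψ : Fm) : SeqValid (.and φ ψ) (.and ψ φ) :=
  and_iff.mpr ⟨and_right φ ψ, and_left φ ψ⟩

end SeqValid

namespace IsCumulative

variable {R : Fm → Fm → Prop}

theorem of_seqValid (h : IsCumulative R) {φ ψ : Fm} (hv : SeqValid φ ψ) : R φ ψ :=
  h.rw φ ψ φ hv (h.refl φ)

theorem and_intro (h : IsCumulative R) {φ ψ χ : Fm} (hψ : R φ ψ) (hχ : R φ χ) :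
    R φ (.and ψ χ) := by
  have hφψ_χ : R (.and φ ψ) χ := h.cm _ _ _ hψ hχ
  have hφψχ : R (.and (.and φ ψ) χ) (.and ψ χ) := h.of_seqValid <|
    SeqValid.and_iff.mpr ⟨(SeqValid.and_left _ _).trans (SeqValid.and_right _ _),
      SeqValid.and_right _ _⟩
  exact h.cut _ _ _ (h.cut _ _ _ hφψχ hφψ_χ) hψ

theorem and_iff (h : IsCumulative R) {φ ψ χ : Fm} : R φ (.and ψ χ) ↔ R φ ψ ∧ R φ χ :=
  ⟨fun hψχ => ⟨h.rw _ _ _ (SeqValid.and_left _ _) hψχ, h.rw _ _ _ (SeqValid.and_right _ _) hψχ⟩,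
    fun hψχ => h.and_intro hψχ.1 hψχ.2⟩

theorem reciprocity (h : IsCumulative R) {φ ψ χ : Fm} (hφψ : R φ ψ) (hψφ : R ψ φ)
    (hφχ : R φ χ) : R ψ χ :=
  h.cut _ _ _ (h.lle _ _ _ (SeqValid.and_comm _ _) (SeqValid.and_comm _ _) (h.cm _ _ _ hφψ hφχ))
    hψφ

end IsCumulative

section Supernormal

variable {R : Fm → Fm → Prop} (φ : Fm)

/-- The point `none` satisfies exactly the `R`-consequences of `φ`; the objects `some α`, which
satisfy exactly the valid consequences of `α`, make the intension of every `ψ` the set of its valid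
consequences, so that `∨` is interpreted syntactically. -/
def supernormalPolarity (R : Fm → Fm → Prop) : Polarity where
  Obj := Option Fm
  Feat := Fm
  I o β := o.elim (R φ β) (SeqValid · β)

theorem supernormalPolarity_I_of_seqValid (h : IsCumulative R) {o : Option Fm} {ψ β : Fm}
    (ho : (supernormalPolarity φ R).I o ψ) (hv : SeqValid ψ β) :
    (supernormalPolarity φ R).I o β := by
  cases o with
  | none => exact h.rw _ _ _ hv ho
  | some α => exact SeqValid.trans ho hv

def supernormalConcept (h : IsCumulative R) (ψ : Fm) : Concept (supernormalPolarity φ R) where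
  ext := {o | (supernormalPolarity φ R).I o ψ}
  int := {β | SeqValid ψ β}
  up_ext := Set.ext fun _ =>
    ⟨fun hβ => hβ (some ψ) (SeqValid.refl ψ),
      fun hβ _ ho => supernormalPolarity_I_of_seqValid φ h ho hβ⟩
  dn_int := Set.ext fun _ =>
    ⟨fun ho => ho ψ (SeqValid.refl ψ), fun ho _ hβ => supernormalPolarity_I_of_seqValid φ h ho hβ⟩

def supernormalModel (h : IsCumulative R) : Model where
  P := supernormalPolarity φ R
  V p := supernormalConcept φ h (.var p)

theorem supernormalModel_interp (h : IsCumulative R) (ψ : Fm) :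
    (supernormalModel φ h).interp ψ = supernormalConcept φ h ψ := by
  induction ψ with
  | var p => rfl
  | bot =>
    refine Concept.eq_of_ext_eq ?_
    rw [← (supernormalConcept φ h .bot).dn_int]
    exact congrArg (supernormalPolarity φ R).dn
      (Set.eq_univ_of_forall (α := Fm) SeqValid.bot).symm
  | top =>
    refine Concept.eq_of_ext_eq (Set.eq_univ_of_forall fun o => ?_).symm
    cases o with
    | none => exact h.of_seqValid (SeqValid.top φ)
    | some α => exact SeqValid.top α
  | and ψ χ ihψ ihχ =>
    refine Concept.eq_of_ext_eq ?_
    simp only [Model.interp, ihψ, ihχ]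
    ext o
    cases o with
    | none => exact h.and_iff.symm
    | some α => exact SeqValid.and_iff.symm
  | or ψ χ ihψ ihχ =>
    refine Concept.eq_of_ext_eq ?_
    simp only [Model.interp, ihψ, ihχ]
    rw [← (supernormalConcept φ h (.or ψ χ)).dn_int]
    exact congrArg (supernormalPolarity φ R).dn (Set.ext fun _ => SeqValid.or_iff.symm)

def supernormalPointed (h : IsCumulative R) : PointedModel := ⟨supernormalModel φ h, none⟩

theorem supernormalFor_supernormalPointed (h : IsCumulative R) :
    SupernormalFor R (supernormalPointed φ h) φ := fun ψ => by
  change R φ ψ ↔ none ∈ ((supernormalModel φ h).interp ψ).ext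
  rw [supernormalModel_interp]
  rfl

end Supernormal

section Smooth

variable {α : Type*} {r : α → α → Prop} {P Q : Set α} {s : α}

theorem MinimalIn.inter (hs : MinimalIn r P s) (hQ : s ∈ Q) : MinimalIn r (P ∩ Q) s :=
  ⟨⟨hs.1, hQ⟩, fun u hu => hs.2 u hu.1⟩

theorem Smooth.minimalIn_of_minimalIn_inter (hP : Smooth r P)
    (hPQ : ∀ t, MinimalIn r P t → t ∈ Q) (hs : MinimalIn r (P ∩ Q) s) : MinimalIn r P s := by
  rcases hP s hs.1.1 with hmin | ⟨u, hu, hus⟩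
  · exact hmin
  · exact absurd hus (hs.2 u ⟨hu.1, hPQ u hu⟩)

theorem Smooth.exists_minimalIn_of_reflGen [IsTrans α r] (hP : Smooth r P) {t : α} (ht : t ∈ P)
    (hts : ReflGen r t s) : ∃ u, MinimalIn r P u ∧ ReflGen r u s := by
  rcases hP t ht with hmin | ⟨u, hu, hut⟩
  · exact ⟨t, hmin, hts⟩
  · refine ⟨u, hu, .single ?_⟩
    rcases hts with _ | hts
    exacts [hut, _root_.trans hut hts]

theorem MinimalIn.mem_of_loop [IsTrans α r] {P : ℕ → Set α} {n : ℕ} (hP : ∀ i, Smooth r (P i))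
    (hstep : ∀ i < n, ∀ t, MinimalIn r (P i) t → t ∈ P (i + 1))
    (hback : ∀ t, MinimalIn r (P n) t → t ∈ P 0) (hs : MinimalIn r (P 0) s) : s ∈ P n := by
  have descend : ∀ i ≤ n, ∃ u, MinimalIn r (P i) u ∧ ReflGen r u s := by
    intro i
    induction i with
    | zero => exact fun _ => ⟨s, hs, .refl⟩
    | succ i ih =>
      intro hi
      obtain ⟨u, hu, hus⟩ := ih (by omega)
      exact (hP (i + 1)).exists_minimalIn_of_reflGen (hstep i hi u hu) hus
  obtain ⟨u, hu, _ | hus⟩ := descend n le_rfl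
  · exact hu.1
  · exact absurd hus (hs.2 u (hback u hu))

end Smooth

namespace Frame

variable {F : Frame}

theorem hat_mono {φ ψ : Fm} (hv : SeqValid φ ψ) : F.hat φ ⊆ F.hat ψ :=
  fun _ hs Ma hMa => hv Ma.M (hs Ma hMa)

theorem hat_and (φ ψ : Fm) : F.hat (.and φ ψ) = F.hat φ ∩ F.hat ψ :=
  Set.ext fun _ => forall₂_and

theorem isCumulative_conseq (hF : F.IsCumulativeModel) : IsCumulative F.conseq where
  refl _ _ hs := hs.1
  lle φ ψ _ h₁ h₂ hφ s hs := hφ s (by rwa [(hat_mono h₁).antisymm (hat_mono h₂)])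
  rw _ _ _ hv hχ s hs := hat_mono hv (hχ s hs)
  cm φ ψ _ hψ hχ s hs := hχ s ((hF φ).minimalIn_of_minimalIn_inter hψ (hat_and φ ψ ▸ hs))
  cut φ ψ _ hχ hψ s hs := hχ s (hat_and φ ψ ▸ hs.inter (hψ s hs))

theorem loopClosed_conseq (hF : F.IsCumulativeModel) [IsTrans F.S F.prec] :
    LoopClosed F.conseq :=
  fun _ φ hstep hback _ hs => hs.mem_of_loop (fun i => hF (φ i)) hstep hback

end Frame

theorem exists_nat_chain_of_reflTransGen {α : Type*} {r : α → α → Prop} {a b : α}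
    (h : ReflTransGen r a b) :
    ∃ (n : ℕ) (f : ℕ → α), f 0 = a ∧ f n = b ∧ ∀ i < n, r (f i) (f (i + 1)) := by
  induction h with
  | refl => exact ⟨0, fun _ => a, rfl, rfl, fun _ hi => absurd hi (Nat.not_lt_zero _)⟩
  | @tail b c _ hbc ih =>
    obtain ⟨n, f, hf0, hfn, hf⟩ := ih
    refine ⟨n + 1, fun i => if i ≤ n then f i else c, by simp [hf0], by simp, fun i hi => ?_⟩
    rcases Nat.lt_succ_iff_lt_or_eq.mp hi with hi | rfl
    · simpa [hi.le, Nat.succ_le_of_lt hi] using hf i hi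
    · simpa [hfn] using hbc

theorem LoopClosed.of_reflTransGen {R : Fm → Fm → Prop} (hl : LoopClosed R) {φ ψ : Fm}
    (hφψ : ReflTransGen R φ ψ) (hψφ : R ψ φ) : R φ ψ := by
  obtain ⟨n, f, rfl, rfl, hf⟩ := exists_nat_chain_of_reflTransGen hφψ
  exact hl n f hf hψφ

section FormulaFrame

variable {R : Fm → Fm → Prop}

def formulaFrame (R : Fm → Fm → Prop) : Frame where
  S := Fm
  l φ := {Ma | NormalFor R Ma φ}
  prec φ ψ := ReflTransGen R ψ φ ∧ ¬ ReflTransGen R φ ψ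

theorem formulaFrame_prec_irrefl (φ : Fm) : ¬ (formulaFrame R).prec φ φ :=
  fun h => h.2 h.1

theorem formulaFrame_prec_trans {φ ψ χ : Fm} (h₁ : (formulaFrame R).prec φ ψ)
    (h₂ : (formulaFrame R).prec ψ χ) : (formulaFrame R).prec φ χ :=
  ⟨h₂.1.trans h₁.1, fun hφχ => h₂.2 (h₁.1.trans hφχ)⟩

theorem formulaFrame_prec_of_not (hl : LoopClosed R) {φ χ : Fm} (hχφ : R χ φ) (hφχ : ¬ R φ χ) :
    (formulaFrame R).prec φ χ :=
  ⟨.single hχφ, fun h => hφχ (hl.of_reflTransGen h hχφ)⟩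

theorem formulaFrame_mem_hat (h : IsCumulative R) {χ ψ : Fm} :
    χ ∈ (formulaFrame R).hat ψ ↔ R χ ψ :=
  ⟨fun hχ => (supernormalFor_supernormalPointed χ h ψ).mpr
      (hχ _ fun ψ => (supernormalFor_supernormalPointed χ h ψ).mp),
    fun hχψ _ hMa => hMa ψ hχψ⟩

theorem formulaFrame_minimalIn_hat (h : IsCumulative R) (hl : LoopClosed R) {φ χ : Fm} :
    MinimalIn (formulaFrame R).prec ((formulaFrame R).hat φ) χ ↔ R χ φ ∧ R φ χ := by
  constructor
  · rintro ⟨hχ, hmin⟩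
    have hχφ : R χ φ := (formulaFrame_mem_hat h).mp hχ
    exact ⟨hχφ, by_contra fun hφχ =>
      hmin φ ((formulaFrame_mem_hat h).mpr (h.refl φ)) (formulaFrame_prec_of_not hl hχφ hφχ)⟩
  · rintro ⟨hχφ, hφχ⟩
    exact ⟨(formulaFrame_mem_hat h).mpr hχφ,
      fun ψ hψ hψχ => hψχ.2 (.tail (.single ((formulaFrame_mem_hat h).mp hψ)) hφχ)⟩

theorem formulaFrame_isCumulativeModel (h : IsCumulative R) (hl : LoopClosed R) :
    (formulaFrame R).IsCumulativeModel := by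
  intro φ χ hχ
  have hχφ : R χ φ := (formulaFrame_mem_hat h).mp hχ
  by_cases hφχ : R φ χ
  · exact .inl ((formulaFrame_minimalIn_hat h hl).mpr ⟨hχφ, hφχ⟩)
  · exact .inr ⟨φ, (formulaFrame_minimalIn_hat h hl).mpr ⟨h.refl φ, h.refl φ⟩,
      formulaFrame_prec_of_not hl hχφ hφχ⟩

theorem formulaFrame_conseq (h : IsCumulative R) (hl : LoopClosed R) :
    (formulaFrame R).conseq = R := by
  funext φ ψ
  refine propext ⟨fun hφψ => ?_, fun hφψ χ hχ => ?_⟩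
  · exact (formulaFrame_mem_hat h).mp (hφψ φ ((formulaFrame_minimalIn_hat h hl).mpr
      ⟨h.refl φ, h.refl φ⟩))
  · obtain ⟨hχφ, hφχ⟩ := (formulaFrame_minimalIn_hat h hl).mp hχ
    exact (formulaFrame_mem_hat h).mpr (h.reciprocity hφχ hχφ hφψ)

end FormulaFrame

/-- representation theorem for loop-cumulative relations. -/
theorem representation_loop_cumulative (R : Fm → Fm → Prop) :
    (IsCumulative R ∧ LoopClosed R) ↔
    ∃ F : Frame, F.IsCumulativeModel ∧
      Irreflexive F.prec ∧ Transitive F.prec ∧ R = F.conseq := by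
  constructor
  · rintro ⟨h, hl⟩
    exact ⟨formulaFrame R, formulaFrame_isCumulativeModel h hl, formulaFrame_prec_irrefl,
      fun _ _ _ => formulaFrame_prec_trans, (formulaFrame_conseq h hl).symm⟩
  · rintro ⟨F, hF, -, htrans, rfl⟩
    have : IsTrans F.S F.prec := ⟨fun _ _ _ => @htrans _ _ _⟩
    exact ⟨F.isCumulative_conseq hF, F.loopClosed_conseq hF⟩

end DR
end

section
/- Representation theorem for conceptual preferential models: a binary relation on 𝓛-formulas is a conceptual cumulative consequence relation if and only if it equals |~_𝓜 for some conceptual preferential model 𝓜, i.e., a conceptual cumulative model whose labelling assigns a single pointed polarity-based model to each state. -/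
namespace DR

/-! ### Auxiliary material for the representation theorem -/

section RepAux

/-! Semantic validity lemmas. -/

lemma sv_refl (φ : Fm) : SeqValid φ φ := fun _ => subset_rfl

lemma sv_trans {φ ψ χ : Fm} (h1 : SeqValid φ ψ) (h2 : SeqValid ψ χ) : SeqValid φ χ :=
  fun M => (h1 M).trans (h2 M)

lemma sv_and_left (φ ψ : Fm) : SeqValid (Fm.and φ ψ) φ :=
  fun _ => Set.inter_subset_left

lemma sv_and_right (φ ψ : Fm) : SeqValid (Fm.and φ ψ) ψ :=
  fun _ => Set.inter_subset_right

lemma sv_and_intro {χ φ ψ : Fm} (h1 : SeqValid χ φ) (h2 : SeqValid χ ψ) :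
    SeqValid χ (Fm.and φ ψ) :=
  fun M => Set.subset_inter (h1 M) (h2 M)

lemma sv_top (φ : Fm) : SeqValid φ Fm.top := fun _ => Set.subset_univ _

lemma sv_bot (φ : Fm) : SeqValid Fm.bot φ := fun M => by
  calc (M.interp Fm.bot).ext = M.P.dn Set.univ := rfl
    _ ⊆ M.P.dn (M.interp φ).int := M.P.dn_anti (Set.subset_univ _)
    _ = (M.interp φ).ext := (M.interp φ).dn_int

lemma sv_or_left (φ ψ : Fm) : SeqValid φ (Fm.or φ ψ) := fun M => by
  calc (M.interp φ).ext = M.P.dn (M.interp φ).int := (M.interp φ).dn_int.symm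
    _ ⊆ M.P.dn ((M.interp φ).int ∩ (M.interp ψ).int) := M.P.dn_anti Set.inter_subset_left
    _ = (M.interp (Fm.or φ ψ)).ext := rfl

lemma sv_or_right (φ ψ : Fm) : SeqValid ψ (Fm.or φ ψ) := fun M => by
  calc (M.interp ψ).ext = M.P.dn (M.interp ψ).int := (M.interp ψ).dn_int.symm
    _ ⊆ M.P.dn ((M.interp φ).int ∩ (M.interp ψ).int) := M.P.dn_anti Set.inter_subset_right
    _ = (M.interp (Fm.or φ ψ)).ext := rfl

lemma sv_or_elim {φ ψ χ : Fm} (h1 : SeqValid φ χ) (h2 : SeqValid ψ χ) :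
    SeqValid (Fm.or φ ψ) χ := fun M => by
  have i1 : (M.interp χ).int ⊆ (M.interp φ).int := by
    rw [← (M.interp χ).up_ext, ← (M.interp φ).up_ext]
    exact M.P.up_anti (h1 M)
  have i2 : (M.interp χ).int ⊆ (M.interp ψ).int := by
    rw [← (M.interp χ).up_ext, ← (M.interp ψ).up_ext]
    exact M.P.up_anti (h2 M)
  calc (M.interp (Fm.or φ ψ)).ext
      = M.P.dn ((M.interp φ).int ∩ (M.interp ψ).int) := rfl
    _ ⊆ M.P.dn (M.interp χ).int := M.P.dn_anti (Set.subset_inter i1 i2)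
    _ = (M.interp χ).ext := (M.interp χ).dn_int

/-! Derived rules of cumulative consequence relations. -/

variable {R : Fm → Fm → Prop}

lemma and_rule (h : IsCumulative R) {φ ψ χ : Fm} (hψ : R φ ψ) (hχ : R φ χ) :
    R φ (Fm.and ψ χ) := by
  have h1 : R (Fm.and φ ψ) χ := h.cm φ ψ χ hψ hχ
  have h2 : R (Fm.and (Fm.and φ ψ) χ) (Fm.and ψ χ) :=
    h.rw _ _ _ (sv_and_intro (sv_trans (sv_and_left _ _) (sv_and_right _ _)) (sv_and_right _ _))
      (h.refl _)
  have h3 : R (Fm.and φ ψ) (Fm.and ψ χ) := h.cut _ _ _ h2 h1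
  exact h.cut φ ψ (Fm.and ψ χ) h3 hψ

lemma equiv_rule (h : IsCumulative R) {φ α χ : Fm}
    (h1 : R φ α) (h2 : R α φ) (h3 : R φ χ) : R α χ := by
  have k1 : R (Fm.and φ α) χ := h.cm φ α χ h1 h3
  have k2 : R (Fm.and α φ) χ :=
    h.lle (Fm.and φ α) (Fm.and α φ) χ
      (sv_and_intro (sv_and_right _ _) (sv_and_left _ _))
      (sv_and_intro (sv_and_right _ _) (sv_and_left _ _)) k1
  exact h.cut α φ χ k2 h2

/-! The canonical supernormal pointed model for a formula. -/

/-- Polarity whose objects are formulas plus one extra point `none`. -/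
def cPol (R : Fm → Fm → Prop) (α : Fm) : Polarity where
  Obj := Option Fm
  Feat := Fm
  I := fun o β => match o with
    | none => R α β
    | some γ => SeqValid γ β

lemma concept_ext_inj {P : Polarity} {c d : Concept P} (he : c.ext = d.ext) : c = d := by
  have hi : c.int = d.int := by rw [← c.up_ext, ← d.up_ext, he]
  cases c; cases d; simp_all

lemma concept_int_inj {P : Polarity} {c d : Concept P} (hi : c.int = d.int) : c = d := by
  have he : c.ext = d.ext := by rw [← c.dn_int, ← d.dn_int, hi]
  cases c; cases d; simp_all

/-- The concept of a formula in the canonical polarity. -/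
def cConc (h : IsCumulative R) (α ψ : Fm) : Concept (cPol R α) where
  ext := {o | (cPol R α).I o ψ}
  int := {β | SeqValid ψ β}
  up_ext := by
    ext β
    simp only [Polarity.up, Set.mem_setOf_eq]
    constructor
    · intro hb
      exact hb (some ψ) (sv_refl ψ)
    · intro hb o ho
      cases o with
      | none => exact h.rw _ _ _ hb ho
      | some γ => exact sv_trans ho hb
  dn_int := by
    ext o
    simp only [Polarity.dn, Set.mem_setOf_eq]
    cases o with
    | none =>
      constructor
      · intro hd; exact hd ψ (sv_refl ψ)
      · intro hψ β hβ; exact h.rw _ _ _ hβ hψ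
    | some γ =>
      constructor
      · intro hd; exact hd ψ (sv_refl ψ)
      · intro hγ β hβ; exact sv_trans hγ hβ

/-- The canonical polarity-based model. -/
def cModel (h : IsCumulative R) (α : Fm) : Model where
  P := cPol R α
  V := fun n => cConc h α (Fm.var n)

lemma interp_eq (h : IsCumulative R) (α ψ : Fm) :
    (cModel h α).interp ψ = cConc h α ψ := by
  induction ψ with
  | var n => rfl
  | bot =>
    apply concept_int_inj
    show Set.univ = {β | SeqValid Fm.bot β}
    ext β
    simp only [Set.mem_univ, Set.mem_setOf_eq, true_iff]
    exact sv_bot β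
  | top =>
    apply concept_ext_inj
    show Set.univ = {o | (cPol R α).I o Fm.top}
    ext o
    simp only [Set.mem_univ, Set.mem_setOf_eq, true_iff]
    cases o with
    | none => exact h.rw _ _ _ (sv_top α) (h.refl α)
    | some γ => exact sv_top γ
  | and φ ψ ihφ ihψ =>
    apply concept_ext_inj
    show ((cModel h α).interp φ).ext ∩ ((cModel h α).interp ψ).ext
        = {o | (cPol R α).I o (Fm.and φ ψ)}
    rw [ihφ, ihψ]
    ext o
    simp only [Set.mem_inter_iff, Set.mem_setOf_eq, cConc]
    cases o with
    | none =>
      constructor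
      · rintro ⟨a, b⟩; exact and_rule h a b
      · intro c; exact ⟨h.rw _ _ _ (sv_and_left _ _) c, h.rw _ _ _ (sv_and_right _ _) c⟩
    | some γ =>
      constructor
      · rintro ⟨a, b⟩; exact sv_and_intro a b
      · intro c; exact ⟨sv_trans c (sv_and_left _ _), sv_trans c (sv_and_right _ _)⟩
  | or φ ψ ihφ ihψ =>
    apply concept_int_inj
    show ((cModel h α).interp φ).int ∩ ((cModel h α).interp ψ).int
        = {β | SeqValid (Fm.or φ ψ) β}
    rw [ihφ, ihψ]
    ext β
    simp only [Set.mem_inter_iff, Set.mem_setOf_eq, cConc]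
    constructor
    · rintro ⟨a, b⟩; exact sv_or_elim a b
    · intro c; exact ⟨sv_trans (sv_or_left _ _) c, sv_trans (sv_or_right _ _) c⟩

/-- The canonical supernormal pointed model for `α`. -/
def cPt (h : IsCumulative R) (α : Fm) : PointedModel where
  M := cModel h α
  pt := (none : Option Fm)

lemma cPt_sat (h : IsCumulative R) (α ψ : Fm) : (cPt h α).sat ψ ↔ R α ψ := by
  show (cPt h α).M.objSat (cPt h α).pt ψ ↔ R α ψ
  show (none : Option Fm) ∈ ((cModel h α).interp ψ).ext ↔ R α ψ
  rw [interp_eq h α ψ]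
  exact Iff.rfl

/-- The canonical preferential frame. -/
def cFrame (h : IsCumulative R) : Frame where
  S := Fm
  l := fun α => {cPt h α}
  prec := fun a b => R b a ∧ ¬ R a b

lemma cFrame_hat_mem (h : IsCumulative R) {α ψ : Fm} :
    α ∈ (cFrame h).hat ψ ↔ R α ψ := by
  constructor
  · intro hs
    exact (cPt_sat h α ψ).1 (hs (cPt h α) rfl)
  · intro hr Ma hMa
    have : Ma = cPt h α := hMa
    rw [this]
    exact (cPt_sat h α ψ).2 hr

lemma cFrame_min_iff (h : IsCumulative R) {φ α : Fm} :
    MinimalIn (cFrame h).prec ((cFrame h).hat φ) α ↔ (R α φ ∧ R φ α) := by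
  constructor
  · intro hm
    have hαφ : R α φ := (cFrame_hat_mem h).1 hm.1
    refine ⟨hαφ, ?_⟩
    by_contra hn
    exact hm.2 φ ((cFrame_hat_mem h).2 (h.refl φ)) ⟨hαφ, hn⟩
  · rintro ⟨hαφ, hφα⟩
    refine ⟨(cFrame_hat_mem h).2 hαφ, ?_⟩
    intro s hs hp
    have hsφ : R s φ := (cFrame_hat_mem h).1 hs
    have hαs : R α s := hp.1
    have hφs : R φ s := equiv_rule h hαφ hφα hαs
    have hsα : R s α := equiv_rule h hφs hsφ hφα
    exact hp.2 hsα

lemma cFrame_cumulativeModel (h : IsCumulative R) : (cFrame h).IsCumulativeModel := by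
  intro ψ t ht
  have htψ : R t ψ := (cFrame_hat_mem h).1 ht
  by_cases hψt : R ψ t
  · exact Or.inl ((cFrame_min_iff h).2 ⟨htψ, hψt⟩)
  · exact Or.inr ⟨ψ, (cFrame_min_iff h).2 ⟨h.refl ψ, h.refl ψ⟩, ⟨htψ, hψt⟩⟩

lemma cFrame_conseq (h : IsCumulative R) : R = (cFrame h).conseq := by
  funext φ ψ
  apply propext
  constructor
  · intro hr s hmin
    obtain ⟨h1, h2⟩ := (cFrame_min_iff h).1 hmin
    exact (cFrame_hat_mem h).2 (equiv_rule h h2 h1 hr)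
  · intro hc
    have := hc φ ((cFrame_min_iff h).2 ⟨h.refl φ, h.refl φ⟩)
    exact (cFrame_hat_mem h).1 this

/-! Soundness: any conceptual cumulative model yields a cumulative relation. -/

lemma hat_mono (F : Frame) {φ ψ : Fm} (hv : SeqValid φ ψ) : F.hat φ ⊆ F.hat ψ :=
  fun _ hs Ma hMa => hv Ma.M (hs Ma hMa)

lemma hat_and (F : Frame) (φ ψ : Fm) : F.hat (Fm.and φ ψ) = F.hat φ ∩ F.hat ψ := by
  ext s
  constructor
  · intro hs
    exact ⟨hat_mono F (sv_and_left φ ψ) hs, hat_mono F (sv_and_right φ ψ) hs⟩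
  · rintro ⟨h1, h2⟩ Ma hMa
    exact ⟨h1 Ma hMa, h2 Ma hMa⟩

lemma conseq_cumulative (F : Frame) (hcum : F.IsCumulativeModel) :
    IsCumulative F.conseq where
  refl := fun _ _ hmin => hmin.1
  lle := fun φ ψ χ h1 h2 hc s hmin => by
    have hEq : F.hat φ = F.hat ψ := subset_antisymm (hat_mono F h1) (hat_mono F h2)
    exact hc s (by rwa [hEq])
  rw := fun φ ψ χ hv hc s hmin => hat_mono F hv (hc s hmin)
  cm := fun φ ψ χ h1 h2 s hmin => by
    rw [hat_and] at hmin
    have hsφ : s ∈ F.hat φ := hmin.1.1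
    have hminφ : MinimalIn F.prec (F.hat φ) s := by
      rcases hcum φ s hsφ with hm | ⟨u, hu, hus⟩
      · exact hm
      · exact absurd hus (hmin.2 u ⟨hu.1, h1 u hu⟩)
    exact h2 s hminφ
  cut := fun φ ψ χ h1 h2 s hmin => by
    have hsψ : s ∈ F.hat ψ := h2 s hmin
    have : MinimalIn F.prec (F.hat (Fm.and φ ψ)) s := by
      rw [hat_and]
      exact ⟨⟨hmin.1, hsψ⟩, fun t ht => hmin.2 t ht.1⟩
    exact h1 s this

end RepAux

/-- representation theorem for conceptual preferential models. -/
theorem representation_preferential (R : Fm → Fm → Prop) :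
    IsCumulative R ↔
    ∃ F : Frame, F.IsCumulativeModel ∧
      (∀ s : F.S, ∃ Ma : PointedModel, F.l s = {Ma}) ∧ R = F.conseq := by
  constructor
  · intro h
    exact ⟨cFrame h, cFrame_cumulativeModel h, fun s => ⟨cPt h s, rfl⟩, cFrame_conseq h⟩
  · rintro ⟨F, hcm, -, rfl⟩
    exact conseq_cumulative F hcm

end DR
end
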